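/- For every n ≥ 1 and variables x_1,…,x_n (in a commutative ring), det_{0 ≤ i,j ≤ n−1}( h_{2j−i}(x_{n−i}, x_{n−i+1}, …, x_n) ) = det_{0 ≤ i,j ≤ n−1}( h_{2j−i}(x_1, x_2, …, x_n) ), where on the left the (i,j) entry is the complete homogeneous symmetric polynomial of degree 2j−i in the last i+1 variables x_{n−i},…,x_n, and on the right it is the complete homogeneous symmetric polynomial of degree 2j−i in all n variables. -/
import Mathlib

open Finset

def hsym {R : Type*} [CommRing R] (m : ℕ) {k : ℕ} (v : Fin k → R) : R :=
  ∑ f ∈ (Finset.univ : Finset (Fin m → Fin k)).filter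
      (fun f => ∀ a b : Fin m, a ≤ b → f a ≤ f b),
    ∏ i, v (f i)

section Lemmas
variable {R : Type*} [CommRing R]

lemma hsym_zero {k : ℕ} (v : Fin k → R) : hsym 0 v = 1 := by
  simp [hsym]

lemma hsym_congr {k k' : ℕ} (h : k = k') (m : ℕ) (v : Fin k → R) (v' : Fin k' → R)
    (hv : ∀ j : Fin k, v j = v' (Fin.cast h j)) : hsym m v = hsym m v' := by
  subst h
  have : v = v' := funext fun j => hv j
  rw [this]

lemma hsym_succ (m k : ℕ) (v : Fin (k + 1) → R) :
    hsym (m + 1) v = hsym (m + 1) (v ∘ Fin.succ) + v 0 * hsym m v := by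
  classical
  unfold hsym
  rw [← Finset.sum_filter_add_sum_filter_not
    ((Finset.univ : Finset (Fin (m+1) → Fin (k+1))).filter
      (fun f => ∀ a b : Fin (m+1), a ≤ b → f a ≤ f b)) (fun f => f 0 = 0)]
  rw [add_comm]
  congr 1
  · -- f 0 ≠ 0 part equals hsym (m+1) (v ∘ Fin.succ)
    have key : ∀ f : Fin (m+1) → Fin (k+1),
        f ∈ ((Finset.univ : Finset (Fin (m+1) → Fin (k+1))).filter
          (fun f => ∀ a b : Fin (m+1), a ≤ b → f a ≤ f b)).filter (fun f => ¬ f 0 = 0) →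
        ∀ a, f a ≠ 0 := by
      intro f hf a
      simp only [Finset.mem_filter, Finset.mem_univ, true_and] at hf
      intro h0
      have h1 : f 0 ≤ f a := hf.1 0 a (Fin.zero_le a)
      rw [h0] at h1
      exact hf.2 (Fin.le_zero_iff.mp h1)
    refine Finset.sum_bij' (fun f hf => fun a => (f a).pred (key f hf a))
      (fun g _ => fun a => (g a).succ) ?_ ?_ ?_ ?_ ?_
    · intro f hf
      simp only [Finset.mem_filter, Finset.mem_univ, true_and] at hf ⊢
      intro a b hab
      have := hf.1 a b hab
      exact (Fin.pred_le_pred_iff).mpr this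
    · intro g hg
      simp only [Finset.mem_filter, Finset.mem_univ, true_and] at hg ⊢
      constructor
      · intro a b hab
        exact Fin.succ_le_succ_iff.mpr (hg a b hab)
      · exact (Fin.succ_ne_zero _)
    · intro f hf; funext a; simp
    · intro g hg; funext a; simp
    · intro f hf
      apply Finset.prod_congr rfl
      intro a _
      simp [Function.comp]
  · -- f 0 = 0 part equals v 0 * hsym m v
    rw [Finset.mul_sum]
    refine Finset.sum_bij' (fun f _ => f ∘ Fin.succ) (fun g _ => Fin.cases 0 g) ?_ ?_ ?_ ?_ ?_
    · intro f hf
      simp only [Finset.mem_filter, Finset.mem_univ, true_and] at hf ⊢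
      intro a b hab
      exact hf.1 a.succ b.succ (Fin.succ_le_succ_iff.mpr hab)
    · intro g hg
      simp only [Finset.mem_filter, Finset.mem_univ, true_and] at hg ⊢
      constructor
      · intro a b hab
        induction a using Fin.cases with
        | zero => simp [Fin.zero_le]
        | succ a =>
          induction b using Fin.cases with
          | zero =>
            have : a.succ = 0 := le_antisymm hab (Fin.zero_le _)
            exact absurd this (Fin.succ_ne_zero a)
          | succ b =>
            simp only [Fin.cases_succ]
            exact hg a b (by exact_mod_cast Fin.succ_le_succ_iff.mp hab)
      · simp
    · intro f hf
      simp only [Finset.mem_filter, Finset.mem_univ, true_and] at hf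
      funext a
      induction a using Fin.cases with
      | zero => simp [hf.2]
      | succ a => simp
    · intro g hg; funext a; simp
    · intro f hf
      simp only [Finset.mem_filter, Finset.mem_univ, true_and] at hf
      rw [Fin.prod_univ_succ, hf.2]
      rfl

end Lemmas

section Main
variable {R : Type*} [CommRing R]

lemma hsym_succ' (m : ℕ) {k : ℕ} (hk : 1 ≤ k) (v : Fin k → R) :
    hsym (m + 1) v
      = hsym (m + 1) (fun j : Fin (k - 1) => v ⟨(j : ℕ) + 1, by have := j.isLt; omega⟩)
        + v ⟨0, hk⟩ * hsym m v := by
  obtain ⟨k', rfl⟩ : ∃ k', k = k' + 1 := ⟨k - 1, by omega⟩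
  rw [hsym_succ]
  rfl

/-- `h_m` in the variables `x s, x (s+1), …, x (n-1)`. -/
def Hh {n : ℕ} (x : Fin n → R) (m s : ℕ) : R :=
  hsym m (fun j : Fin (n - s) => x ⟨s + (j : ℕ), by have := j.isLt; omega⟩)

lemma Hh_zero {n : ℕ} (x : Fin n → R) (s : ℕ) : Hh x 0 s = 1 := hsym_zero _

lemma Hh_rec {n : ℕ} (x : Fin n → R) (m s : ℕ) (hs : s < n) :
    Hh x (m + 1) s = Hh x (m + 1) (s + 1) + x ⟨s, hs⟩ * Hh x m s := by
  unfold Hh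
  rw [hsym_succ' m (k := n - s) (by omega)]
  congr 1
  · exact hsym_congr (by omega) _ _ _ (fun j => by
      congr 1
      apply Fin.ext
      simp
      omega)

/-- The matrix whose row `i` uses the variables `x (c i - 1), …, x (n-1)`. -/
def Mc {n : ℕ} (x : Fin n → R) (c : Fin n → ℕ) : Matrix (Fin n) (Fin n) R :=
  Matrix.of fun i j => if (i : ℕ) ≤ 2 * (j : ℕ) then Hh x (2 * (j : ℕ) - (i : ℕ)) (c i - 1) else 0

lemma step {n : ℕ} (x : Fin n → R) (c : Fin n → ℕ) (i : Fin n) (hlt : (i : ℕ) + 1 < n)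
    (h2 : 2 ≤ c i) (hcn : c i ≤ n - (i : ℕ))
    (heq : c ⟨(i : ℕ) + 1, hlt⟩ = c i - 1) :
    (Mc x (Function.update c i (c i - 1))).det = (Mc x c).det := by
  set i' : Fin n := ⟨(i : ℕ) + 1, hlt⟩ with hi'
  have hvi' : (i' : ℕ) = (i : ℕ) + 1 := rfl
  have hne : i ≠ i' := Fin.ne_of_val_ne (by omega)
  have hx : c i - 2 < n := by omega
  have hM : Mc x (Function.update c i (c i - 1)) =
      (Mc x c).updateRow i ((Mc x c) i + x ⟨c i - 2, hx⟩ • (Mc x c) i') := by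
    ext a j
    by_cases ha : a = i
    · subst ha
      simp only [Mc, Matrix.of_apply, Matrix.updateRow_self, Function.update_self,
        Pi.add_apply, Pi.smul_apply, smul_eq_mul]
      rcases lt_trichotomy (a : ℕ) (2 * (j : ℕ)) with h | h | h
      · rw [if_pos (le_of_lt h), if_pos (le_of_lt h), if_pos (by omega)]
        obtain ⟨m, hm⟩ : ∃ m, 2 * (j : ℕ) - (a : ℕ) = m + 1 := ⟨2 * j - a - 1, by omega⟩
        rw [hm]
        have h3 : 2 * (j : ℕ) - (i' : ℕ) = m := by omega
        rw [h3, heq]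
        have h4 : c a - 1 - 1 = c a - 2 := by omega
        have h5 : c a - 2 + 1 = c a - 1 := by omega
        rw [h4, ← h5, Hh_rec x m (c a - 2) (by omega), h5]
      · rw [if_pos h.le, if_pos h.le, if_neg (by omega)]
        have h0 : 2 * (j : ℕ) - (a : ℕ) = 0 := by omega
        rw [h0, Hh_zero, Hh_zero]
        ring
      · rw [if_neg (by omega), if_neg (by omega), if_neg (by omega)]
        ring
    · simp only [Mc, Matrix.of_apply, Matrix.updateRow_ne ha, Function.update_of_ne ha]
  rw [hM, Matrix.det_updateRow_add_smul_self _ hne]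

lemma mainlemma {n : ℕ} (x : Fin n → R) : ∀ N (c : Fin n → ℕ),
    (∀ i, 1 ≤ c i) → (∀ i : Fin n, c i ≤ n - (i : ℕ)) →
    (∀ i : Fin n, ∀ h : (i : ℕ) + 1 < n, c i ≤ c ⟨(i : ℕ) + 1, h⟩ + 1) →
    (∑ i, c i) ≤ N → (Mc x c).det = (Mc x (fun _ => 1)).det := by
  intro N
  induction N with
  | zero =>
    intro c h1 _ _ hsum
    have hall : ∀ i, c i = 1 := by
      intro i
      have h := Finset.single_le_sum (f := c) (fun a _ => Nat.zero_le _) (Finset.mem_univ i)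
      have := h1 i
      omega
    rw [funext hall]
  | succ N ih =>
    intro c h1 hn hadj hsum
    by_cases hall : ∀ i, c i = 1
    · rw [funext hall]
    · push_neg at hall
      obtain ⟨i₀, hi₀⟩ := hall
      have hne : (Finset.univ : Finset (Fin n)).Nonempty := ⟨i₀, Finset.mem_univ _⟩
      obtain ⟨B, hB⟩ : ∃ B, B = Finset.univ.sup c := ⟨_, rfl⟩
      have hB2 : 2 ≤ B := le_trans (by have := h1 i₀; omega)
        (hB ▸ Finset.le_sup (Finset.mem_univ i₀))
      have hT : ((Finset.univ : Finset (Fin n)).filter (fun i => c i = B)).Nonempty := by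
        obtain ⟨a, _, hi⟩ := Finset.exists_mem_eq_sup Finset.univ hne c
        exact ⟨a, Finset.mem_filter.mpr ⟨Finset.mem_univ _, (hB.trans hi).symm⟩⟩
      set i := ((Finset.univ : Finset (Fin n)).filter (fun i => c i = B)).max' hT with hidef
      have hiB : c i = B := (Finset.mem_filter.mp (Finset.max'_mem _ hT)).2
      have hlt : (i : ℕ) + 1 < n := by have := hn i; omega
      set i' : Fin n := ⟨(i : ℕ) + 1, hlt⟩ with hi'
      have hvi' : (i' : ℕ) = (i : ℕ) + 1 := rfl
      have hi'ne : i' ≠ i := Fin.ne_of_val_ne (by omega)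
      have hi'B : c i' = B - 1 := by
        have hle : c i' ≤ B := hB ▸ Finset.le_sup (Finset.mem_univ i')
        have hneB : c i' ≠ B := by
          intro h
          have h2 : i' ≤ i := Finset.le_max' _ i' (Finset.mem_filter.mpr ⟨Finset.mem_univ _, h⟩)
          rw [Fin.le_def] at h2
          omega
        have hadj' : c i ≤ c i' + 1 := hadj i hlt
        omega
      have hci2 : 2 ≤ c i := by omega
      have heqc : c ⟨(i : ℕ) + 1, hlt⟩ = c i - 1 := by
        rw [hiB]
        exact hi'B
      rw [← step x c i hlt hci2 (hn i) heqc]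
      have hsum' : ∑ a, Function.update c i (c i - 1) a ≤ N := by
        have e1 := Finset.sum_update_of_mem (Finset.mem_univ i) c (c i - 1)
        rw [← Finset.erase_eq] at e1
        have e2 : c i + ∑ a ∈ Finset.univ.erase i, c a = ∑ a, c a :=
          Finset.add_sum_erase _ c (Finset.mem_univ i)
        omega
      apply ih _ _ _ _ hsum'
      · intro a
        by_cases h : a = i
        · subst h; simp only [Function.update_self]; omega
        · rw [Function.update_of_ne h]; exact h1 a
      · intro a
        by_cases h : a = i
        · subst h; simp only [Function.update_self]; have := hn i; omega
        · rw [Function.update_of_ne h]; exact hn a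
      · intro a ha
        by_cases h : a = i
        · subst h
          have hbeq : (⟨(i : ℕ) + 1, ha⟩ : Fin n) = i' := Fin.ext (by omega)
          rw [Function.update_self, hbeq, Function.update_of_ne hi'ne, hi'B, hiB]
          omega
        · rw [Function.update_of_ne h]
          by_cases h2 : (⟨(a : ℕ) + 1, ha⟩ : Fin n) = i
          · rw [h2, Function.update_self]
            have hab : c a ≤ B := hB ▸ Finset.le_sup (Finset.mem_univ a)
            omega
          · rw [Function.update_of_ne h2]
            exact hadj a ha

end Main

/-- Row-manipulation identity: the determinant of the matrix with `(i,j)` entry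
`h_{2j−i}(x_{n−i},…,x_n)` (the last `i+1` variables, 1-indexed) equals the determinant of
the matrix with `(i,j)` entry `h_{2j−i}(x_1,…,x_n)` (all `n` variables), with the
convention `h_m = 0` for `m < 0`. -/
theorem det_partial_vars_eq_det_full_vars {R : Type*} [CommRing R] (n : ℕ) (hn : 1 ≤ n)
    (x : Fin n → R) :
    Matrix.det (Matrix.of fun i j : Fin n =>
      if (i : ℕ) ≤ 2 * (j : ℕ) then
        hsym (2 * (j : ℕ) - (i : ℕ))
          (fun m : Fin ((i : ℕ) + 1) => x ⟨n - 1 - (i : ℕ) + (m : ℕ), by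
            have hi := i.isLt; have hm := m.isLt; omega⟩)
      else 0) =
    Matrix.det (Matrix.of fun i j : Fin n =>
      if (i : ℕ) ≤ 2 * (j : ℕ) then hsym (2 * (j : ℕ) - (i : ℕ)) x else 0) := by
  have e1 : (Matrix.of fun i j : Fin n =>
      if (i : ℕ) ≤ 2 * (j : ℕ) then
        hsym (2 * (j : ℕ) - (i : ℕ))
          (fun m : Fin ((i : ℕ) + 1) => x ⟨n - 1 - (i : ℕ) + (m : ℕ), by
            have hi := i.isLt; have hm := m.isLt; omega⟩)
      else 0) = Mc x (fun i : Fin n => n - (i : ℕ)) := by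
    ext i j
    simp only [Mc, Hh, Matrix.of_apply]
    by_cases h : (i : ℕ) ≤ 2 * (j : ℕ)
    · rw [if_pos h, if_pos h]
      refine hsym_congr (by have := i.isLt; omega) _ _ _ (fun m => ?_)
      congr 1
      apply Fin.ext
      simp
      have := i.isLt
      omega
    · rw [if_neg h, if_neg h]
  have e2 : (Matrix.of fun i j : Fin n =>
      if (i : ℕ) ≤ 2 * (j : ℕ) then hsym (2 * (j : ℕ) - (i : ℕ)) x else 0)
      = Mc x (fun _ : Fin n => 1) := by
    ext i j
    simp only [Mc, Hh, Matrix.of_apply]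
    by_cases h : (i : ℕ) ≤ 2 * (j : ℕ)
    · rw [if_pos h, if_pos h]
      refine hsym_congr (by omega) _ _ _ (fun m => ?_)
      congr 1
      apply Fin.ext
      simp
    · rw [if_neg h, if_neg h]
  rw [e1, e2]
  exact mainlemma x (∑ i : Fin n, (n - (i : ℕ))) _
    (fun i => by have := i.isLt; omega)
    (fun i => le_rfl)
    (fun i h => by show n - (i : ℕ) ≤ n - ((i : ℕ) + 1) + 1; omega)
    le_rfl
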